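/- arXiv:1509.08325 — 6 statements merged into one kernel-verified Lean document; each statement's English description precedes it below -/
import Mathlib

section
/- Let (x_n)_{n≥1} be a sequence of natural numbers with x_1 ≥ 2, and let (g_n)_{n≥1} be a sequence of natural numbers such that x_{n+1} = x_n² + g_n and g_n ≤ x_n for all n ≥ 1. Then the sequence ln(ln x_n)/n converges to ln 2 as n → ∞. -/
/-!
Write `L n = ln x_n`. Since `x_n² ≤ x_{n+1} ≤ 2 x_n²`, we have `2 L_n ≤ L_{n+1} ≤ 2 L_n + ln 2`,
so `2^n L_1 / 2 ≤ L_n ≤ 2^n (L_1 + ln 2) / 2` with `L_1 > 0`. Taking logarithms,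
`ln L_n = n ln 2 + O(1)`.
-/

open Filter Real

section Recurrence

variable {L : ℕ → ℝ}

theorem pow_mul_le_of_forall_mul_le_succ {ρ : ℝ} (hρ : 0 ≤ ρ) (h : ∀ n, ρ * L n ≤ L (n + 1))
    (n : ℕ) : ρ ^ n * L 0 ≤ L n := by
  induction n with
  | zero => simp
  | succ n ih =>
    calc ρ ^ (n + 1) * L 0 = ρ * (ρ ^ n * L 0) := by ring
      _ ≤ ρ * L n := mul_le_mul_of_nonneg_left ih hρ
      _ ≤ L (n + 1) := h n

theorem add_le_two_pow_mul_of_forall_le_two_mul_add {b : ℝ} (h : ∀ n, L (n + 1) ≤ 2 * L n + b)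
    (n : ℕ) : L n + b ≤ 2 ^ n * (L 0 + b) := by
  -- `-(L n + b)` satisfies the lower recurrence `2 M n ≤ M (n + 1)`.
  have := pow_mul_le_of_forall_mul_le_succ (L := fun n => -(L n + b)) zero_le_two
    (fun n => by linarith [h n]) n
  linarith

end Recurrence

theorem tendsto_natCast_mul_add_div (r A : ℝ) :
    Tendsto (fun n : ℕ => (n * r + A) / n) atTop (nhds r) := by
  have h : Tendsto (fun n : ℕ => r + A / n) atTop (nhds r) := by
    simpa using (tendsto_const_div_atTop_nhds_zero_nat A).const_add r
  refine h.congr' ?_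
  filter_upwards [eventually_ne_atTop 0] with n hn
  field_simp

theorem tendsto_log_div_natCast_of_pow_mul_bounds {L : ℕ → ℝ} {ρ a b : ℝ} (hρ : 0 < ρ)
    (ha : 0 < a) (h : ∀ᶠ n in atTop, ρ ^ n * a ≤ L n ∧ L n ≤ ρ ^ n * b) :
    Tendsto (fun n : ℕ => log (L n) / n) atTop (nhds (log ρ)) := by
  have hb : 0 < b := by
    obtain ⟨n, hlow, hupp⟩ := h.exists
    exact pos_of_mul_pos_right ((mul_pos (pow_pos hρ n) ha).trans_le (hlow.trans hupp))
      (pow_pos hρ n).le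
  have log_pow_mul (c : ℝ) (hc : 0 < c) (n : ℕ) : log (ρ ^ n * c) = n * log ρ + log c := by
    rw [log_mul (pow_pos hρ n).ne' hc.ne', log_pow]
  refine tendsto_of_tendsto_of_tendsto_of_le_of_le' (tendsto_natCast_mul_add_div _ (log a))
    (tendsto_natCast_mul_add_div _ (log b)) ?_ ?_
  · filter_upwards [h] with n hn
    rw [← log_pow_mul a ha]
    gcongr
    exact hn.1
  · filter_upwards [h] with n hn
    rw [← log_pow_mul b hb]
    gcongr
    · exact (mul_pos (pow_pos hρ n) ha).trans_le hn.1
    · exact hn.2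

theorem two_mul_log_eq_log_sq (a : ℝ) : 2 * log a = log (a ^ 2) := by
  rw [log_pow]
  norm_num

theorem two_mul_log_le_log_sq_add {a g : ℝ} (ha : 0 < a) (hg : 0 ≤ g) :
    2 * log a ≤ log (a ^ 2 + g) := by
  rw [two_mul_log_eq_log_sq]
  gcongr
  linarith

theorem log_sq_add_le_two_mul_log_add_log_two {a g : ℝ} (ha : 1 ≤ a) (hg₀ : 0 ≤ g)
    (hg : g ≤ a) :
    log (a ^ 2 + g) ≤ 2 * log a + log 2 := by
  rw [two_mul_log_eq_log_sq, ← log_mul (by positivity) two_ne_zero]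
  gcongr
  nlinarith

/-- If a sequence of natural numbers satisfies `x 1 ≥ 2` and the nonlinear
recurrence `x (n+1) = (x n)^2 + g n` with `g n ≤ x n` for all `n ≥ 1`, then
`ln(ln x_n)/n → ln 2`. -/
theorem loglog_div_tendsto_log_two_of_quadratic_recurrence
    (x g : ℕ → ℕ) (hx1 : 2 ≤ x 1)
    (hrec : ∀ n : ℕ, 1 ≤ n → x (n + 1) = (x n) ^ 2 + g n)
    (hg : ∀ n : ℕ, 1 ≤ n → g n ≤ x n) :
    Tendsto (fun n : ℕ => Real.log (Real.log (x n)) / n) atTop (nhds (Real.log 2)) := by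
  have hx_one : ∀ n, 1 ≤ n → 1 ≤ x n :=
    Nat.le_induction (by omega) fun n hn _ => by rw [hrec n hn]; nlinarith
  set L : ℕ → ℝ := fun m => log (x (m + 1))
  have hL_rec (m : ℕ) : L (m + 1) = log ((x (m + 1) : ℝ) ^ 2 + g (m + 1)) := by
    simp [L, hrec (m + 1) m.succ_pos]
  have hL_lower (m : ℕ) : 2 * L m ≤ L (m + 1) := by
    rw [hL_rec]
    exact two_mul_log_le_log_sq_add (by exact_mod_cast hx_one _ m.succ_pos) (Nat.cast_nonneg _)
  have hL_upper (m : ℕ) : L (m + 1) ≤ 2 * L m + log 2 := by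
    rw [hL_rec]
    exact log_sq_add_le_two_mul_log_add_log_two (by exact_mod_cast hx_one _ m.succ_pos)
      (Nat.cast_nonneg _) (by exact_mod_cast hg _ m.succ_pos)
  have hL0 : 0 < L 0 := log_pos (by exact_mod_cast hx1)
  refine tendsto_log_div_natCast_of_pow_mul_bounds two_pos (half_pos hL0)
    (b := (L 0 + log 2) / 2) ?_
  filter_upwards [eventually_ne_atTop 0] with n hn
  obtain ⟨m, rfl⟩ := Nat.exists_eq_add_one_of_ne_zero hn
  have hlow := pow_mul_le_of_forall_mul_le_succ zero_le_two hL_lower m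
  have hupp := add_le_two_pow_mul_of_forall_le_two_mul_add hL_upper m
  constructor
  · calc 2 ^ (m + 1) * (L 0 / 2) = 2 ^ m * L 0 := by ring
      _ ≤ L m := hlow
  · calc L m ≤ 2 ^ m * (L 0 + log 2) := by linarith [log_nonneg one_le_two]
      _ = 2 ^ (m + 1) * ((L 0 + log 2) / 2) := by ring
end

section
/- Let B ⊆ A × A × A be a basic set such that F dominates G, and suppose either (i) (1,1,1) ∈ B and n_F ≥ 2, or (ii) (1,1,1) ∉ B and both n_F ≥ 2 and n_G ≥ 2. Then the entropy limit exists and h(B) = ln 2, i.e., ln(ln c_n)/n → ln 2 as n → ∞. -/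
open Filter Real

/-- The set of `n`-blocks of the binary Markov tree-shift over the alphabet `Fin 2`
(symbols `0,1` standing for `1,2`) with basic set `B` of 2-blocks `(i,j,k)`:
labelings of the binary words of length `< n` such that every node `v` of length
`≤ n-2`, together with its children `v0` and `v1`, forms a pattern in `B`. -/
def Block2 (B : Finset (Fin 2 × Fin 2 × Fin 2)) (n : ℕ) :
    Set ({w : List (Fin 2) // w.length < n} → Fin 2) :=
  {u | ∀ (v : List (Fin 2)) (h : v.length + 2 ≤ n),
    (u ⟨v, by omega⟩,
     u ⟨v ++ [0], by simp; omega⟩,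
     u ⟨v ++ [1], by simp; omega⟩) ∈ B}

/-- The `n`-blocks whose root is labeled `i`. -/
def BlockRoot2 (B : Finset (Fin 2 × Fin 2 × Fin 2)) (i : Fin 2) (n : ℕ) :
    Set ({w : List (Fin 2) // w.length < n} → Fin 2) :=
  {u | u ∈ Block2 B n ∧ ∀ h : 0 < n, u ⟨[], by simpa using h⟩ = i}

/-- `n_F`: the number of pairs `(j,k)` with `(1,j,k) ∈ B` (symbol `1` is `0 : Fin 2`). -/
def nF (B : Finset (Fin 2 × Fin 2 × Fin 2)) : ℕ :=
  (Finset.univ.filter fun jk : Fin 2 × Fin 2 => (0, jk.1, jk.2) ∈ B).card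

/-- `n_G`: the number of pairs `(j,k)` with `(2,j,k) ∈ B` (symbol `2` is `1 : Fin 2`). -/
def nG (B : Finset (Fin 2 × Fin 2 × Fin 2)) : ℕ :=
  (Finset.univ.filter fun jk : Fin 2 × Fin 2 => (1, jk.1, jk.2) ∈ B).card

/-- `F` dominates `G`: every pattern allowed under root symbol `2` is allowed under
root symbol `1`. -/
def FDomG (B : Finset (Fin 2 × Fin 2 × Fin 2)) : Prop :=
  ∀ jk : Fin 2 × Fin 2, (1, jk.1, jk.2) ∈ B → (0, jk.1, jk.2) ∈ B

/-- `G` dominates `F`: every pattern allowed under root symbol `1` is allowed under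
root symbol `2`. -/
def GDomF (B : Finset (Fin 2 × Fin 2 × Fin 2)) : Prop :=
  ∀ jk : Fin 2 × Fin 2, (0, jk.1, jk.2) ∈ B → (1, jk.1, jk.2) ∈ B

/-!
Every `n`-block labels the `2 ^ n - 1` words of length `< n`, so `c_n ≤ 2 ^ 2 ^ n`.
Conversely, the hypotheses give a child pattern `(p 0, p 1)` that can be repeated along the
whole tree (label each node by `p` of its last letter) and a set `S` of at least two child
patterns admissible under both labels `p 0` and `p 1`: in case (i) `p = (1, 1)` and `S = F`, in
case (ii) `S = G`, which dominance makes admissible under the label `1` as well. Keeping this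
labeling down to depth `n - 2` and choosing the children of the `2 ^ (n - 2)` nodes of depth
`n - 2` freely in `S` gives `c_n ≥ 2 ^ 2 ^ (n - 2)`. So `ln c_n` is within a constant factor of
`2 ^ n`, and `ln (ln c_n) / n → ln 2`.
-/

open Finset

lemma lt_two_of_mem_map_val_append_one {w : List (Fin 2)} {d : ℕ}
    (hd : d ∈ w.map Fin.val ++ [1]) : d < 2 := by
  simp only [List.mem_append, List.mem_map, List.mem_singleton] at hd
  rcases hd with ⟨a, -, rfl⟩ | rfl
  exacts [a.isLt, one_lt_two]

/-- Binary expansion with an extra leading digit `1`, so that trailing zeros of `w` count. -/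
def binaryCode (n : ℕ) (w : {w : List (Fin 2) // w.length < n}) : Fin (2 ^ n) :=
  ⟨Nat.ofDigits 2 (w.1.map Fin.val ++ [1]),
    (Nat.ofDigits_lt_base_pow_length one_lt_two fun _ =>
      lt_two_of_mem_map_val_append_one).trans_le
        (Nat.pow_le_pow_right two_pos (by simpa using w.2))⟩

lemma binaryCode_injective (n : ℕ) : Function.Injective (binaryCode n) := by
  intro w w' h
  have hdigits (w : {w : List (Fin 2) // w.length < n}) :
      Nat.digits 2 (binaryCode n w) = w.1.map Fin.val ++ [1] :=
    Nat.digits_ofDigits 2 one_lt_two _ (fun _ => lt_two_of_mem_map_val_append_one) (by simp)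
  have hval := hdigits w
  rw [h, hdigits w', List.append_cancel_right_eq] at hval
  exact Subtype.ext (List.map_injective_iff.mpr Fin.val_injective hval).symm

instance (n : ℕ) : Finite {w : List (Fin 2) // w.length < n} :=
  Finite.of_injective _ (binaryCode_injective n)

lemma card_words_lt_le (n : ℕ) : Nat.card {w : List (Fin 2) // w.length < n} ≤ 2 ^ n := by
  simpa using Nat.card_le_card_of_injective _ (binaryCode_injective n)

section Blocks

variable (B : Finset (Fin 2 × Fin 2 × Fin 2))

lemma card_block2_le (n : ℕ) : Nat.card (Block2 B n) ≤ 2 ^ 2 ^ n :=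
  calc Nat.card (Block2 B n)
      ≤ Nat.card ({w : List (Fin 2) // w.length < n} → Fin 2) :=
        Nat.card_le_card_of_injective _ Subtype.val_injective
    _ = 2 ^ Nat.card {w : List (Fin 2) // w.length < n} := by simp [Nat.card_fun]
    _ ≤ 2 ^ 2 ^ n := Nat.pow_le_pow_right two_pos (card_words_lt_le n)

/-- `childPairs B 0` and `childPairs B 1` are the sets `F` and `G` counted by `nF B`, `nG B`. -/
def childPairs (i : Fin 2) : Finset (Fin 2 × Fin 2) :=
  univ.filter fun jk => (i, jk.1, jk.2) ∈ B

/-- The `(m + 2)`-block that agrees with `L` up to depth `m` and gives the children of each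
node `v` of depth `m` the labels `f v`. -/
def extendLeaves (L : List (Fin 2) → Fin 2) (m : ℕ)
    (f : List.Vector (Fin 2) m → Fin 2 × Fin 2)
    (w : {w : List (Fin 2) // w.length < m + 2}) : Fin 2 :=
  if h : w.1.length ≤ m then L w.1
  else
    let p := f ⟨w.1.dropLast, by have := w.2; simp only [List.length_dropLast]; omega⟩
    if w.1.getLastD 0 = 0 then p.1 else p.2

variable {L : List (Fin 2) → Fin 2} {m : ℕ} {f : List.Vector (Fin 2) m → Fin 2 × Fin 2}

lemma extendLeaves_of_length_le {v : List (Fin 2)} (hv : v.length ≤ m) :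
    extendLeaves L m f ⟨v, by omega⟩ = L v := by
  simp [extendLeaves, hv]

lemma extendLeaves_append_zero {v : List (Fin 2)} (hv : v.length = m) :
    extendLeaves L m f ⟨v ++ [0], by simp; omega⟩ = (f ⟨v, hv⟩).1 := by
  simp [extendLeaves, hv]

lemma extendLeaves_append_one {v : List (Fin 2)} (hv : v.length = m) :
    extendLeaves L m f ⟨v ++ [1], by simp; omega⟩ = (f ⟨v, hv⟩).2 := by
  simp [extendLeaves, hv]

lemma extendLeaves_mem_block2 {S : Finset (Fin 2 × Fin 2)}
    (hLS : ∀ v, (L (v ++ [0]), L (v ++ [1])) ∈ S)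
    (hSB : ∀ v, ∀ s ∈ S, (L v, s.1, s.2) ∈ B)
    (hf : ∀ v, f v ∈ S) : extendLeaves L m f ∈ Block2 B (m + 2) := by
  intro v hv
  rcases (show v.length ≤ m by omega).eq_or_lt with hvm | hvm
  · rw [extendLeaves_of_length_le hvm.le, extendLeaves_append_zero hvm,
      extendLeaves_append_one hvm]
    exact hSB v _ (hf _)
  · rw [extendLeaves_of_length_le hvm.le, extendLeaves_of_length_le (by simpa using hvm),
      extendLeaves_of_length_le (by simpa using hvm)]
    exact hSB v _ (hLS v)

lemma extendLeaves_injective : Function.Injective (extendLeaves L m) := by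
  intro f g h
  funext ⟨v, hv⟩
  have h0 := congrFun h ⟨v ++ [0], by simp; omega⟩
  have h1 := congrFun h ⟨v ++ [1], by simp; omega⟩
  rw [extendLeaves_append_zero hv, extendLeaves_append_zero hv] at h0
  rw [extendLeaves_append_one hv, extendLeaves_append_one hv] at h1
  exact Prod.ext h0 h1

lemma card_pow_le_card_block2 {S : Finset (Fin 2 × Fin 2)}
    (hLS : ∀ v, (L (v ++ [0]), L (v ++ [1])) ∈ S)
    (hSB : ∀ v, ∀ s ∈ S, (L v, s.1, s.2) ∈ B)
    (m : ℕ) : S.card ^ 2 ^ m ≤ Nat.card (Block2 B (m + 2)) := by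
  let extend (f : List.Vector (Fin 2) m → S) : Block2 B (m + 2) :=
    ⟨extendLeaves L m (fun v => f v), extendLeaves_mem_block2 B hLS hSB fun v => (f v).2⟩
  have hextend : Function.Injective extend := fun f g h =>
    Subtype.val_injective.comp_left (extendLeaves_injective (Subtype.mk.inj h))
  calc S.card ^ 2 ^ m = Nat.card (List.Vector (Fin 2) m → S) := by simp
    _ ≤ Nat.card (Block2 B (m + 2)) := Nat.card_le_card_of_injective extend hextend

def IsBranching (S : Finset (Fin 2 × Fin 2)) (p : Fin 2 → Fin 2) : Prop :=
  2 ≤ S.card ∧ (p 0, p 1) ∈ S ∧ ∀ b, ∀ s ∈ S, (p b, s.1, s.2) ∈ B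

lemma two_pow_two_pow_le_card_block2 {S : Finset (Fin 2 × Fin 2)} {p : Fin 2 → Fin 2}
    (h : IsBranching B S p) (m : ℕ) : 2 ^ 2 ^ m ≤ Nat.card (Block2 B (m + 2)) :=
  (Nat.pow_le_pow_left h.1 _).trans <|
    card_pow_le_card_block2 B (L := fun v => p (v.getLastD 0)) (by simpa using h.2.1)
      (fun v => h.2.2 _) m

end Blocks

lemma exists_isBranching_of_mem {B : Finset (Fin 2 × Fin 2 × Fin 2)} (h000 : (0, 0, 0) ∈ B)
    (hnF : 2 ≤ nF B) : ∃ S p, IsBranching B S p :=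
  ⟨childPairs B 0, fun _ => 0, hnF, by simpa [childPairs] using h000,
    fun _ _ hs => (mem_filter.mp hs).2⟩

lemma exists_isBranching_of_fDomG {B : Finset (Fin 2 × Fin 2 × Fin 2)} (hdom : FDomG B)
    (hnG : 2 ≤ nG B) : ∃ S p, IsBranching B S p := by
  have hG : ∀ i, ∀ s ∈ childPairs B 1, (i, s.1, s.2) ∈ B := by
    intro i s hs
    have h1 := (mem_filter.mp hs).2
    fin_cases i
    exacts [hdom s h1, h1]
  obtain ⟨q, hq⟩ : (childPairs B 1).Nonempty := card_pos.mp (two_pos.trans_le hnG)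
  exact ⟨childPairs B 1, ![q.1, q.2], hnG, by simpa using hq, fun _ => hG _⟩

lemma tendsto_log_div_of_const_mul_pow_bounds {x : ℕ → ℝ} {C₁ C₂ r : ℝ}
    (hC₁ : 0 < C₁) (hr : 0 < r)
    (h : ∀ᶠ n in atTop, C₁ * r ^ n ≤ x n ∧ x n ≤ C₂ * r ^ n) :
    Tendsto (fun n => log (x n) / n) atTop (nhds (log r)) := by
  have hC₂ : 0 < C₂ := by
    obtain ⟨n, hlow, hup⟩ := h.exists
    exact hC₁.trans_le (le_of_mul_le_mul_right (hlow.trans hup) (pow_pos hr n))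
  have hlim_const_mul_pow {C : ℝ} (hC : 0 < C) :
      Tendsto (fun n : ℕ => log (C * r ^ n) / n) atTop (nhds (log r)) := by
    have hlim := (tendsto_const_div_atTop_nhds_zero_nat (log C)).add_const (log r)
    rw [zero_add] at hlim
    refine hlim.congr' ?_
    filter_upwards [eventually_ne_atTop 0] with n hn
    rw [log_mul hC.ne' (pow_pos hr n).ne', log_pow]
    field_simp
  refine tendsto_of_tendsto_of_tendsto_of_le_of_le' (hlim_const_mul_pow hC₁)
    (hlim_const_mul_pow hC₂) ?_ ?_
  · filter_upwards [h] with n hn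
    gcongr
    exact hn.1
  · filter_upwards [h] with n hn
    have : 0 < x n := lt_of_lt_of_le (by positivity) hn.1
    gcongr
    exact hn.2

lemma log_two_pow_two_pow (k : ℕ) : log ((2 : ℝ) ^ 2 ^ k) = log 2 * 2 ^ k := by
  rw [log_pow]; push_cast; ring

lemma log_bounds_of_two_pow_two_pow {c m : ℕ} (hlow : 2 ^ 2 ^ m ≤ c)
    (hup : c ≤ 2 ^ 2 ^ (m + 2)) :
    log 2 / 4 * 2 ^ (m + 2) ≤ log c ∧ log c ≤ log 2 * 2 ^ (m + 2) := by
  have hlow' : (2 : ℝ) ^ 2 ^ m ≤ c := by exact_mod_cast hlow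
  have hup' : (c : ℝ) ≤ 2 ^ 2 ^ (m + 2) := by exact_mod_cast hup
  constructor
  · calc log 2 / 4 * 2 ^ (m + 2) = log ((2 : ℝ) ^ 2 ^ m) := by
          rw [log_two_pow_two_pow]; ring
      _ ≤ log c := log_le_log (by positivity) hlow'
  · calc log c ≤ log ((2 : ℝ) ^ 2 ^ (m + 2)) :=
          log_le_log ((pow_pos two_pos _).trans_le hlow') hup'
      _ = log 2 * 2 ^ (m + 2) := log_two_pow_two_pow _

/-- If `F` dominates `G` and either (i) `(1,1,1) ∈ B` and `n_F ≥ 2`, or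
(ii) `(1,1,1) ∉ B` and `n_F ≥ 2` and `n_G ≥ 2`, then the entropy limit exists and
equals `ln 2`. -/
theorem entropy_eq_log_two_of_dominant (B : Finset (Fin 2 × Fin 2 × Fin 2))
    (hdom : FDomG B)
    (hcase : ((0, 0, 0) ∈ B ∧ 2 ≤ nF B) ∨
      ((0, 0, 0) ∉ B ∧ 2 ≤ nF B ∧ 2 ≤ nG B)) :
    Tendsto (fun n : ℕ => Real.log (Real.log (Nat.card (Block2 B n))) / n)
      atTop (nhds (Real.log 2)) := by
  obtain ⟨S, p, hbranch⟩ : ∃ S p, IsBranching B S p := hcase.elim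
    (fun h => exists_isBranching_of_mem h.1 h.2) (fun h => exists_isBranching_of_fDomG hdom h.2.2)
  refine tendsto_log_div_of_const_mul_pow_bounds (C₁ := log 2 / 4) (C₂ := log 2)
    (div_pos (log_pos one_lt_two) four_pos) two_pos ?_
  filter_upwards [eventually_ge_atTop 2] with n hn
  obtain ⟨m, rfl⟩ := Nat.exists_eq_add_of_le' hn
  exact log_bounds_of_two_pow_two_pow (two_pow_two_pow_le_card_block2 B hbranch m)
    (card_block2_le B (m + 2))
end

section
/- For every integer m ≥ 2, let γ_m be the multinacci number of order m, i.e., the unique real number in the interval (1,2) satisfying γ_m^{−1} + γ_m^{−2} + ⋯ + γ_m^{−m} = 1. Then there exist integers d ≥ 2 and k ≥ 2 and a basic set B ⊆ A × A^d over an alphabet A of size k such that the entropy limit of X^B exists and equals ln γ_m, i.e., ln(ln |B_n(X^B)|)/n → ln γ_m as n → ∞. -/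
open Filter Real

/-- The set of `n`-blocks of the Markov tree-shift on `d`-ary trees over the alphabet
`Fin k` with basic set `B ⊆ A × A^d`: labelings of the words of length `< n` such that
every node together with its `d` children forms a pattern in `B`. -/
def Block (d k : ℕ) (B : Finset (Fin k × (Fin d → Fin k))) (n : ℕ) :
    Set ({w : List (Fin d) // w.length < n} → Fin k) :=
  {u | ∀ (v : List (Fin d)) (h : v.length + 2 ≤ n),
    (u ⟨v, by omega⟩, fun j => u ⟨v ++ [j], by simp; omega⟩) ∈ B}

/-- The `n`-blocks whose root is labeled `i`. -/
def BlockRoot (d k : ℕ) (B : Finset (Fin k × (Fin d → Fin k))) (i : Fin k) (n : ℕ) :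
    Set ({w : List (Fin d) // w.length < n} → Fin k) :=
  {u | u ∈ Block d k B n ∧ ∀ h : 0 < n, u ⟨[], by simpa using h⟩ = i}

/-!
Give every node of the binary tree an age in `{1, …, m + 1}`: a left child is one older than its
parent, a right child has age `1`, and age `m + 1` is absorbing. The alphabet `Fin (m + 2)` has two
symbols of age `1` and one symbol of each age `2, …, m + 1`, and `B` allows exactly the transitions
of this dynamics. The ages in a block are determined by the age of its root, so a block is
determined by its root and its labels at the nodes of age `1`; below a root of age `1` these labels
are free. Hence `ln |B_n|` lies between `s_n ln 2` and `(s_n + 1) ln (m + 2)`, where `s_n` counts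
the nodes of age `1` and depth `< n` below a root of age `1`.

Let `c_ℓ(a)` be the number of nodes of age `1` at depth `ℓ` below a node of age `a`. Then
`c_{ℓ+1}(a) = c_ℓ(a + 1) + c_ℓ(1)` and `c_ℓ(m + 1) = 0`, and the equation defining `γ` says that
`(γ^{1-a})_a` is a left eigenvector of this recursion for the eigenvalue `γ`:
`∑_a γ^{1-a} c_ℓ(a) = γ^ℓ`. As `c_ℓ(a) ≤ c_ℓ(1)`, this gives `γ^ℓ / m ≤ c_ℓ(1) ≤ γ^ℓ`, so `s_n`
is of order `γ^n` and `ln ln |B_n| = n ln γ + O(1)`.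
-/

theorem sum_range_inv_pow_eq_of_sum_Icc {K : Type*} [Field K] {γ : K} (hγ : γ ≠ 0) {m : ℕ}
    (h : ∑ j ∈ Finset.Icc 1 m, γ⁻¹ ^ j = 1) : ∑ i ∈ Finset.range m, γ⁻¹ ^ i = γ := by
  rw [← Finset.Ico_add_one_right_eq_Icc, Finset.sum_Ico_eq_sum_range] at h
  simp only [Nat.add_sub_cancel, pow_add, pow_one, ← Finset.mul_sum] at h
  exact ((inv_mul_eq_one₀ hγ).1 h).symm

theorem tendsto_log_div_of_bounds {x : ℕ → ℝ} {a b γ : ℝ} (ha : 0 < a) (hγ : 0 < γ)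
    (h : ∀ᶠ n : ℕ in atTop, a * γ ^ n ≤ x n ∧ x n ≤ b * γ ^ n) :
    Tendsto (fun n : ℕ => log (x n) / n) atTop (nhds (log γ)) := by
  have lim : ∀ c : ℝ, Tendsto (fun n : ℕ => (log c + n * log γ) / n) atTop (nhds (log γ)) := by
    intro c
    have := (tendsto_const_div_atTop_nhds_zero_nat (log c)).add_const (log γ)
    rw [zero_add] at this
    refine this.congr' ?_
    filter_upwards [eventually_ne_atTop 0] with n hn
    field_simp
  refine tendsto_of_tendsto_of_tendsto_of_le_of_le' (lim a) (lim b) ?_ ?_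
  · filter_upwards [h] with n ⟨hlo, _⟩
    gcongr
    rw [← log_pow, ← log_mul ha.ne' (by positivity)]
    exact log_le_log (by positivity) hlo
  · filter_upwards [h] with n ⟨hlo, hhi⟩
    have hx : 0 < x n := (mul_pos ha (pow_pos hγ n)).trans_le hlo
    have hb : 0 < b := pos_of_mul_pos_left (hx.trans_le hhi) (by positivity)
    gcongr
    rw [← log_pow, ← log_mul hb.ne' (by positivity)]
    exact log_le_log hx hhi

theorem sum_inv_pow_mul_shift_add_head {K : Type*} [Field K] {γ : K} (hγ : γ ≠ 0) {m : ℕ}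
    (hsum : ∑ i ∈ Finset.range m, γ⁻¹ ^ i = γ) (c : ℕ → K) (hc : c m = 0) :
    ∑ i ∈ Finset.range m, γ⁻¹ ^ i * (c (i + 1) + c 0) =
      γ * ∑ i ∈ Finset.range m, γ⁻¹ ^ i * c i := by
  obtain _ | M := m
  · simp
  calc ∑ i ∈ Finset.range (M + 1), γ⁻¹ ^ i * (c (i + 1) + c 0)
      = ∑ i ∈ Finset.range M, γ⁻¹ ^ i * c (i + 1) + γ * c 0 := by
        simp only [mul_add, Finset.sum_add_distrib, ← Finset.sum_mul, hsum]
        rw [Finset.sum_range_succ, hc, mul_zero, add_zero]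
    _ = γ * ∑ i ∈ Finset.range (M + 1), γ⁻¹ ^ i * c i := by
        rw [Finset.sum_range_succ', mul_add, Finset.mul_sum]
        simp [pow_succ', ← mul_assoc, hγ]

namespace Multinacci

variable (m : ℕ)

def step (a : ℕ) (j : Fin 2) : ℕ :=
  if j = 1 then (if a ≤ m then 1 else m + 1) else min (a + 1) (m + 1)

def age (b : ℕ) (v : List (Fin 2)) : ℕ := v.foldl (step m) b

variable {m}

lemma age_append_singleton (b : ℕ) (v : List (Fin 2)) (j : Fin 2) :
    age m b (v ++ [j]) = step m (age m b v) j := by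
  simp [age]

lemma one_le_age {b : ℕ} (hb : 1 ≤ b) (v : List (Fin 2)) : 1 ≤ age m b v := by
  induction v generalizing b with
  | nil => exact hb
  | cons j v ih => exact ih (by unfold step; split_ifs <;> omega)

lemma age_le {b : ℕ} (hb : b ≤ m + 1) (v : List (Fin 2)) : age m b v ≤ m + 1 := by
  induction v generalizing b with
  | nil => exact hb
  | cons j v ih => exact ih (by unfold step; split_ifs <;> omega)

lemma age_mono {b b' : ℕ} (h : b ≤ b') (v : List (Fin 2)) : age m b v ≤ age m b' v := by
  induction v generalizing b b' with
  | nil => exact h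
  | cons j v ih => exact ih (by unfold step; split_ifs <;> omega)

lemma age_dead (v : List (Fin 2)) : age m (m + 1) v = m + 1 := by
  induction v with
  | nil => rfl
  | cons j v ih => simpa [age, step] using ih

def words : ℕ → Finset (List (Fin 2))
  | 0 => {[]}
  | ℓ + 1 => (words ℓ).image (List.cons 0) ∪ (words ℓ).image (List.cons 1)

lemma mem_words {ℓ : ℕ} {v : List (Fin 2)} : v ∈ words ℓ ↔ v.length = ℓ := by
  induction ℓ generalizing v with
  | zero => simp [words]
  | succ ℓ ih =>
    cases v with
    | nil => simp [words]
    | cons j v => fin_cases j <;> simp [words, ih]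

variable (m) in
def ageOneCount (ℓ b : ℕ) : ℕ := ((words ℓ).filter (age m b · = 1)).card

lemma ageOneCount_zero (b : ℕ) : ageOneCount m 0 b = if b = 1 then 1 else 0 := by
  rw [ageOneCount, words, Finset.filter_singleton]
  split_ifs <;> simp_all [age]

lemma ageOneCount_succ (ℓ b : ℕ) :
    ageOneCount m (ℓ + 1) b = ageOneCount m ℓ (step m b 0) + ageOneCount m ℓ (step m b 1) := by
  rw [ageOneCount, words, Finset.filter_union, Finset.card_union_of_disjoint,
    Finset.filter_image, Finset.filter_image, Finset.card_image_of_injective _ List.cons_injective,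
    Finset.card_image_of_injective _ List.cons_injective]
  · rfl
  · simp [Finset.disjoint_left]

lemma ageOneCount_dead (hm : 0 < m) (ℓ : ℕ) : ageOneCount m ℓ (m + 1) = 0 := by
  simp [ageOneCount, age_dead]
  omega

lemma ageOneCount_le_ageOneCount_one {b : ℕ} (hb : 1 ≤ b) (ℓ : ℕ) :
    ageOneCount m ℓ b ≤ ageOneCount m ℓ 1 := by
  refine Finset.card_le_card (Finset.monotone_filter_right _ fun v _ => ?_)
  have := age_mono (m := m) hb v
  have := one_le_age (m := m) le_rfl v
  omega

section Growth

variable {γ : ℝ}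

lemma sum_inv_pow_mul_ageOneCount (hm : 0 < m) (hγ : γ ≠ 0)
    (hsum : ∑ i ∈ Finset.range m, γ⁻¹ ^ i = γ) (ℓ : ℕ) :
    ∑ i ∈ Finset.range m, γ⁻¹ ^ i * (ageOneCount m ℓ (i + 1) : ℝ) = γ ^ ℓ := by
  induction ℓ with
  | zero =>
    rw [Finset.sum_eq_single_of_mem 0 (Finset.mem_range.2 hm)]
    · simp [ageOneCount_zero]
    · intro i _ hi
      simp [ageOneCount_zero, hi]
  | succ ℓ ih =>
    have hrec : ∀ i ∈ Finset.range m, (ageOneCount m (ℓ + 1) (i + 1) : ℝ) =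
        ageOneCount m ℓ (i + 1 + 1) + ageOneCount m ℓ (0 + 1) := by
      intro i hi
      have hi : i < m := Finset.mem_range.1 hi
      have h0 : step m (i + 1) 0 = i + 1 + 1 := by simp [step]; omega
      have h1 : step m (i + 1) 1 = 0 + 1 := by simp [step]; omega
      rw [ageOneCount_succ, h0, h1, Nat.cast_add]
    rw [Finset.sum_congr rfl fun i hi => by rw [hrec i hi],
      sum_inv_pow_mul_shift_add_head hγ hsum (fun i => (ageOneCount m ℓ (i + 1) : ℝ))
        (by simp [ageOneCount_dead hm]), ih, pow_succ']

lemma ageOneCount_le_pow (hm : 0 < m) (hγ : 1 < γ)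
    (hsum : ∑ i ∈ Finset.range m, γ⁻¹ ^ i = γ) (ℓ : ℕ) :
    (ageOneCount m ℓ 1 : ℝ) ≤ γ ^ ℓ := by
  rw [← sum_inv_pow_mul_ageOneCount hm (by positivity) hsum ℓ]
  simpa using Finset.single_le_sum (f := fun i => γ⁻¹ ^ i * (ageOneCount m ℓ (i + 1) : ℝ))
    (fun i _ => by positivity) (Finset.mem_range.2 hm)

lemma pow_le_mul_ageOneCount (hm : 0 < m) (hγ : 1 < γ)
    (hsum : ∑ i ∈ Finset.range m, γ⁻¹ ^ i = γ) (ℓ : ℕ) :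
    γ ^ ℓ ≤ m * ageOneCount m ℓ 1 := by
  rw [← sum_inv_pow_mul_ageOneCount hm (by positivity) hsum ℓ]
  calc _ ≤ ∑ _i ∈ Finset.range m, (ageOneCount m ℓ 1 : ℝ) := Finset.sum_le_sum fun i _ => ?_
    _ = _ := by simp
  have hcount : (ageOneCount m ℓ (i + 1) : ℝ) ≤ ageOneCount m ℓ 1 := by
    exact_mod_cast ageOneCount_le_ageOneCount_one (Nat.le_add_left 1 i) ℓ
  exact (mul_le_of_le_one_left (by positivity)
    (pow_le_one₀ (by positivity) (inv_le_one_of_one_le₀ hγ.le))).trans hcount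

variable (m) in
def freeCount (n : ℕ) : ℕ := ∑ ℓ ∈ Finset.range n, ageOneCount m ℓ 1

lemma pow_le_mul_freeCount (hm : 0 < m) (hγ : 1 < γ)
    (hsum : ∑ i ∈ Finset.range m, γ⁻¹ ^ i = γ) {n : ℕ} (hn : 0 < n) :
    γ ^ n ≤ m * γ * freeCount m n := by
  obtain ⟨n, rfl⟩ := Nat.exists_eq_succ_of_ne_zero hn.ne'
  have hcount : (ageOneCount m n 1 : ℝ) ≤ freeCount m (n + 1) := by
    exact_mod_cast Finset.single_le_sum (f := fun ℓ => ageOneCount m ℓ 1)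
      (fun _ _ => Nat.zero_le _) (Finset.self_mem_range_succ n)
  calc γ ^ (n + 1) = γ * γ ^ n := pow_succ' _ _
    _ ≤ γ * (m * freeCount m (n + 1)) := by
      gcongr
      exact (pow_le_mul_ageOneCount hm hγ hsum n).trans (by gcongr)
    _ = _ := by ring

lemma freeCount_add_one_le (hm : 0 < m) (hγ : 1 < γ)
    (hsum : ∑ i ∈ Finset.range m, γ⁻¹ ^ i = γ) (n : ℕ) :
    (freeCount m n : ℝ) + 1 ≤ γ / (γ - 1) * γ ^ n := by
  have hs : (freeCount m n : ℝ) ≤ ∑ ℓ ∈ Finset.range n, γ ^ ℓ := by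
    rw [freeCount, Nat.cast_sum]
    exact Finset.sum_le_sum fun ℓ _ => ageOneCount_le_pow hm hγ hsum ℓ
  have hγ1 : 0 < γ - 1 := by linarith
  calc (freeCount m n : ℝ) + 1 ≤ ∑ ℓ ∈ Finset.range (n + 1), γ ^ ℓ := by
        rw [Finset.sum_range_succ]
        gcongr
        exact one_le_pow₀ hγ.le
    _ = (γ ^ (n + 1) - 1) / (γ - 1) := geom_sum_eq hγ.ne' _
    _ ≤ γ ^ (n + 1) / (γ - 1) := by gcongr; linarith
    _ = _ := by ring

end Growth

instance finite_words_length_lt (d n : ℕ) : Finite {w : List (Fin d) // w.length < n} :=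
  (List.finite_length_lt (Fin d) n).to_subtype

variable (m) in
def symbolAge (i : Fin (m + 2)) : ℕ := if (i : ℕ) ≤ 1 then 1 else i

lemma one_le_symbolAge (i : Fin (m + 2)) : 1 ≤ symbolAge m i := by
  unfold symbolAge; split_ifs <;> omega

lemma eq_of_symbolAge_eq {i i' : Fin (m + 2)} (h : symbolAge m i = symbolAge m i')
    (h2 : 2 ≤ symbolAge m i) : i = i' := by
  unfold symbolAge at h h2
  split_ifs at h h2 <;> omega

variable (m) in
def basicSet : Finset (Fin (m + 2) × (Fin 2 → Fin (m + 2))) :=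
  Finset.univ.filter fun p => ∀ j, symbolAge m (p.2 j) = step m (symbolAge m p.1) j

lemma symbolAge_eq_age_of_mem_block {n : ℕ} {u : {w : List (Fin 2) // w.length < n} → Fin (m + 2)}
    (hu : u ∈ Block 2 (m + 2) (basicSet m) n) (hn : 0 < n) (v : List (Fin 2)) (hv : v.length < n) :
    symbolAge m (u ⟨v, hv⟩) = age m (symbolAge m (u ⟨[], hn⟩)) v := by
  induction v using List.reverseRecOn with
  | nil => rfl
  | append_singleton v j ih =>
    have hlen : v.length + 2 ≤ n := by simp at hv; omega
    have hstep := hu v hlen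
    simp only [basicSet, Finset.mem_filter] at hstep
    rw [hstep.2 j, ih, age_append_singleton]

variable (m) in
def freeWords (n : ℕ) : Finset (List (Fin 2)) :=
  (Finset.range n).biUnion fun ℓ => (words ℓ).filter (age m 1 · = 1)

lemma mem_freeWords {n : ℕ} {v : List (Fin 2)} :
    v ∈ freeWords m n ↔ v.length < n ∧ age m 1 v = 1 := by
  simp [freeWords, mem_words]

lemma card_freeWords (n : ℕ) : (freeWords m n).card = freeCount m n := by
  rw [freeWords, Finset.card_biUnion]
  · rfl
  · intro i _ j _ hij
    simp only [Function.onFun, Finset.disjoint_left, Finset.mem_filter, mem_words]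
    omega

variable (m) in
def blockOfFree {n : ℕ} (f : freeWords m n → Fin 2) :
    {w : List (Fin 2) // w.length < n} → Fin (m + 2) := fun w =>
  if h : w.1 ∈ freeWords m n then Fin.castLE (by omega) (f ⟨w.1, h⟩)
  else ⟨age m 1 w.1, by have := age_le (m := m) (b := 1) (by omega) w.1; omega⟩

lemma symbolAge_blockOfFree {n : ℕ} (f : freeWords m n → Fin 2)
    (w : {w : List (Fin 2) // w.length < n}) : symbolAge m (blockOfFree m f w) = age m 1 w.1 := by
  unfold blockOfFree
  split_ifs with h
  · have := (f ⟨w.1, h⟩).isLt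
    simp [symbolAge, (mem_freeWords.1 h).2]
    omega
  · have := one_le_age (m := m) le_rfl w.1
    simp [symbolAge]
    omega

lemma blockOfFree_mem {n : ℕ} (f : freeWords m n → Fin 2) :
    blockOfFree m f ∈ Block 2 (m + 2) (basicSet m) n := by
  intro v hv
  simp [basicSet, symbolAge_blockOfFree, age_append_singleton]

lemma blockOfFree_injective {n : ℕ} : Function.Injective (blockOfFree m (n := n)) := by
  intro f g hfg
  funext v
  have hv := congrFun hfg ⟨v.1, (mem_freeWords.1 v.2).1⟩
  simp only [blockOfFree, dif_pos v.2] at hv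
  exact Fin.castLE_injective _ hv

lemma card_block_lower (n : ℕ) : 2 ^ freeCount m n ≤ Nat.card (Block 2 (m + 2) (basicSet m) n) :=
  calc 2 ^ freeCount m n = Nat.card (freeWords m n → Fin 2) := by
        simp [card_freeWords]
    _ ≤ _ := Nat.card_le_card_of_injective (fun f => ⟨blockOfFree m f, blockOfFree_mem f⟩)
        fun _ _ h => blockOfFree_injective (congrArg Subtype.val h)

lemma eq_of_mem_block_of_root_of_free {n : ℕ}
    {u u' : {w : List (Fin 2) // w.length < n} → Fin (m + 2)}
    (hu : u ∈ Block 2 (m + 2) (basicSet m) n) (hu' : u' ∈ Block 2 (m + 2) (basicSet m) n)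
    (hn : 0 < n) (hroot : u ⟨[], hn⟩ = u' ⟨[], hn⟩)
    (hfree : ∀ w : {w : List (Fin 2) // w.length < n}, age m 1 w.1 = 1 → u w = u' w) :
    u = u' := by
  funext ⟨w, hw⟩
  have hage := symbolAge_eq_age_of_mem_block hu hn w hw
  have hage' := symbolAge_eq_age_of_mem_block hu' hn w hw
  rw [hroot] at hage
  rcases (one_le_age (one_le_symbolAge (u' ⟨[], hn⟩)) w).eq_or_lt with h1 | h2
  · exact hfree _ (le_antisymm ((age_mono (one_le_symbolAge _) w).trans h1.ge)
      (one_le_age le_rfl w))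
  · exact eq_of_symbolAge_eq (hage.trans hage'.symm) (hage ▸ h2)

lemma card_block_upper {n : ℕ} (hn : 0 < n) :
    Nat.card (Block 2 (m + 2) (basicSet m) n) ≤ (m + 2) ^ (freeCount m n + 1) := by
  let Φ : Block 2 (m + 2) (basicSet m) n → Fin (m + 2) × (freeWords m n → Fin (m + 2)) :=
    fun u => (u.1 ⟨[], hn⟩, fun v => u.1 ⟨v.1, (mem_freeWords.1 v.2).1⟩)
  have hΦ : Function.Injective Φ := fun u u' h => Subtype.ext <|
    eq_of_mem_block_of_root_of_free u.2 u'.2 hn (congrArg Prod.fst h) fun w hw =>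
      congrFun (congrArg Prod.snd h) ⟨w.1, mem_freeWords.2 ⟨w.2, hw⟩⟩
  calc _ ≤ Nat.card (Fin (m + 2) × (freeWords m n → Fin (m + 2))) :=
        Nat.card_le_card_of_injective Φ hΦ
    _ = _ := by simp [card_freeWords, pow_succ, mul_comm]

lemma log_card_block_bounds {γ : ℝ} (hm : 0 < m) (hγ : 1 < γ)
    (hsum : ∑ i ∈ Finset.range m, γ⁻¹ ^ i = γ) {n : ℕ} (hn : 0 < n) :
    log 2 / (m * γ) * γ ^ n ≤ log (Nat.card (Block 2 (m + 2) (basicSet m) n)) ∧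
      log (Nat.card (Block 2 (m + 2) (basicSet m) n)) ≤ log (m + 2) * (γ / (γ - 1)) * γ ^ n := by
  set s := freeCount m n
  have hlower : (2 : ℝ) ^ s ≤ Nat.card (Block 2 (m + 2) (basicSet m) n) := by
    exact_mod_cast card_block_lower n
  have hupper : (Nat.card (Block 2 (m + 2) (basicSet m) n) : ℝ) ≤ ((m : ℝ) + 2) ^ (s + 1) := by
    exact_mod_cast card_block_upper hn
  constructor
  · calc log 2 / (m * γ) * γ ^ n ≤ log 2 / (m * γ) * (m * γ * s) := by
          gcongr
          exact pow_le_mul_freeCount hm hγ hsum hn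
      _ = log (2 ^ s) := by
          rw [log_pow]
          field_simp
      _ ≤ _ := log_le_log (by positivity) hlower
  · calc _ ≤ log (((m : ℝ) + 2) ^ (s + 1)) :=
          log_le_log ((pow_pos two_pos s).trans_le hlower) hupper
      _ = log (m + 2) * (s + 1) := by
          rw [log_pow]
          push_cast
          ring
      _ ≤ log (m + 2) * (γ / (γ - 1) * γ ^ n) :=
          mul_le_mul_of_nonneg_left (freeCount_add_one_le hm hγ hsum n) (log_nonneg (by linarith))
      _ = _ := by ring

end Multinacci

theorem multinacci_realization_general (m : ℕ) (hm : 2 ≤ m) (γ : ℝ)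
    (hγ1 : 1 < γ)
    (hγ : ∑ j ∈ Finset.Icc 1 m, γ⁻¹ ^ j = 1) :
    ∃ d k : ℕ, 2 ≤ d ∧ 2 ≤ k ∧
      ∃ B : Finset (Fin k × (Fin d → Fin k)),
        Tendsto (fun n : ℕ => Real.log (Real.log (Nat.card (Block d k B n))) / n)
          atTop (nhds (Real.log γ)) := by
  have hsum := sum_range_inv_pow_eq_of_sum_Icc (by positivity) hγ
  refine ⟨2, m + 2, le_rfl, by omega, Multinacci.basicSet m, ?_⟩
  have hm0 : (0 : ℝ) < m := by exact_mod_cast (by omega : 0 < m)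
  exact tendsto_log_div_of_bounds (by positivity) (by positivity) <|
    (eventually_gt_atTop 0).mono fun n hn => Multinacci.log_card_block_bounds (by omega) hγ1 hsum hn

/-- For every `m ≥ 2`, the multinacci number `γ_m` of order `m` — the unique real
number in `(1,2)` with `γ⁻¹ + γ⁻² + ⋯ + γ⁻ᵐ = 1` — is realized: there are `d, k ≥ 2`
and a basic set `B` over `k` symbols on `d`-ary trees whose tree-shift has entropy
`ln γ_m`. -/
theorem multinacci_realization (m : ℕ) (hm : 2 ≤ m) (γ : ℝ)
    (hγ1 : 1 < γ) (hγ2 : γ < 2)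
    (hγ : ∑ j ∈ Finset.Icc 1 m, γ⁻¹ ^ j = 1) :
    ∃ d k : ℕ, 2 ≤ d ∧ 2 ≤ k ∧
      ∃ B : Finset (Fin k × (Fin d → Fin k)),
        Tendsto (fun n : ℕ => Real.log (Real.log (Nat.card (Block d k B n))) / n)
          atTop (nhds (Real.log γ)) :=
  multinacci_realization_general m hm γ hγ1 hγ
end

section
/- Let B ⊆ A × A × A be a basic set whose entropy limit exists and is positive, say ln(ln c_n)/n → h with h > 0. Then the Neumann boundary entropy coincides with h, i.e., ln(ln |B_n^N|)/n → h as n → ∞, if and only if either (1) both (1,1,1) ∈ B and (2,2,2) ∈ B, or (2) there exists i ∈ {1,2} with (1,i,i) ∈ B and (2,i,i) ∈ B. -/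
open Filter Real

/-- `n`-blocks satisfying the Neumann boundary condition: every node of length `n-1`
(written `w ++ [j]` with `|w| = n-2`) carries the same label as its parent `w`. -/
def BlockN (B : Finset (Fin 2 × Fin 2 × Fin 2)) (n : ℕ) :
    Set ({w : List (Fin 2) // w.length < n} → Fin 2) :=
  {u | u ∈ Block2 B n ∧ ∀ (w : List (Fin 2)) (j : Fin 2) (h : w.length + 2 = n),
    u ⟨w ++ [j], by simp; omega⟩ = u ⟨w, by omega⟩}

/-- `n`-blocks satisfying the Dirichlet boundary condition with value `i`: every node
of length `n-1` is labeled `i`. -/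
def BlockD (B : Finset (Fin 2 × Fin 2 × Fin 2)) (i : Fin 2) (n : ℕ) :
    Set ({w : List (Fin 2) // w.length < n} → Fin 2) :=
  {u | u ∈ Block2 B n ∧ ∀ (w : List (Fin 2)) (h : w.length + 1 = n),
    u ⟨w, by omega⟩ = i}

/-- `n`-blocks satisfying the periodic boundary condition: every node of length `n-1`
carries the same label as the root. -/
def BlockP (B : Finset (Fin 2 × Fin 2 × Fin 2)) (n : ℕ) :
    Set ({w : List (Fin 2) // w.length < n} → Fin 2) :=
  {u | u ∈ Block2 B n ∧ ∀ (w : List (Fin 2)) (h : w.length + 1 = n),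
    u ⟨w, by omega⟩ = u ⟨[], by simp; omega⟩}

/-! If `(a, a, a) ∈ B` for every label `a` of the deepest level of a block, copying that level
once more yields a Neumann block one level deeper; if `(x, i, i) ∈ B` for both `x`, a level of
`i`'s can be added first. Either way the `n`-blocks embed into the Neumann `(n + k)`-blocks for a
fixed `k`, and since `|B_n^N| ≤ c_n` and a bounded shift of levels does not change the rate
`ln ln c_n / n`, the Neumann entropy is `h`.
Conversely, if neither condition holds, `B` has at most one pattern `(a, a, a)`, and it is the
only pattern of the form `(x, a, a)`. Going up from the leaves, every interior node of a Neumann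
block then carries that symbol `a`, so the block is constant and there is at most one Neumann
block: the Neumann entropy is `0 ≠ h`. -/

open Topology

abbrev Node (n : ℕ) := {w : List (Fin 2) // w.length < n}

instance (n : ℕ) : Finite (Node n) :=
  (List.finite_length_lt (Fin 2) n).to_subtype

namespace Node

def truncate (n : ℕ) (w : Node (n + 2)) : Node (n + 1) :=
  ⟨w.1.take n, by simp only [List.length_take]; omega⟩

theorem truncate_surjective (n : ℕ) : Function.Surjective (truncate n) := fun w =>
  ⟨⟨w.1, by omega⟩, Subtype.ext (List.take_of_length_le (Nat.le_of_lt_succ w.2))⟩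

end Node

section Blocks

variable {B : Finset (Fin 2 × Fin 2 × Fin 2)}

theorem comp_truncate_mem_blockN {n : ℕ} {u : Node (n + 1) → Fin 2}
    (hu : u ∈ Block2 B (n + 1))
    (hleaf : ∀ w : Node (n + 1), w.1.length = n → (u w, u w, u w) ∈ B) :
    u ∘ Node.truncate n ∈ BlockN B (n + 2) := by
  refine ⟨fun v hv => ?_, fun w j hw => ?_⟩
  · simp only [Function.comp_apply, Node.truncate]
    rcases Nat.lt_or_ge v.length n with hlt | hge
    · simp only [List.take_of_length_le (show v.length ≤ n by omega),
        List.take_of_length_le (show (v ++ [_]).length ≤ n by simp; omega)]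
      exact hu v (by omega)
    · simp only [List.take_left' (show v.length = n by omega),
        List.take_of_length_le (show v.length ≤ n by omega)]
      exact hleaf ⟨v, by omega⟩ (by simp only; omega)
  · simp only [Function.comp_apply, Node.truncate, List.take_left' (show w.length = n by omega),
      List.take_of_length_le (show w.length ≤ n by omega)]

theorem card_le_card_blockN {n : ℕ} {S : Set (Node (n + 1) → Fin 2)}
    (hS : ∀ u ∈ S, u ∈ Block2 B (n + 1) ∧
      ∀ w : Node (n + 1), w.1.length = n → (u w, u w, u w) ∈ B) :
    Nat.card S ≤ Nat.card (BlockN B (n + 2)) := by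
  simp only [Nat.card_coe_set_eq]
  exact Set.ncard_le_ncard_of_injOn (· ∘ Node.truncate n)
    (fun u hu => comp_truncate_mem_blockN (hS u hu).1 (hS u hu).2)
    ((Node.truncate_surjective n).injective_comp_right.injOn) (Set.toFinite _)

def padConst {n : ℕ} (i : Fin 2) (u : Node n → Fin 2) : Node (n + 1) → Fin 2 :=
  fun w => if h : w.1.length < n then u ⟨w.1, h⟩ else i

theorem padConst_injective {n : ℕ} (i : Fin 2) : Function.Injective (padConst (n := n) i) := by
  intro u v huv
  funext w
  simpa [padConst, w.2] using congrFun huv ⟨w.1, by omega⟩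

theorem padConst_mem_blockD {n : ℕ} {i : Fin 2} (hi : ∀ x, (x, i, i) ∈ B)
    {u : Node n → Fin 2} (hu : u ∈ Block2 B n) : padConst i u ∈ BlockD B i (n + 1) := by
  refine ⟨fun v hv => ?_, fun w hw => by simp [padConst, show ¬ w.length < n by omega]⟩
  rcases Nat.lt_or_ge (v.length + 2) (n + 1) with hlt | hge
  · simpa [padConst, show v.length < n by omega, show v.length + 1 < n by omega]
      using hu v (by omega)
  · simpa [padConst, show v.length < n by omega, show ¬ v.length + 1 < n by omega] using hi _

theorem card_block2_le_card_blockD {n : ℕ} {i : Fin 2} (hi : ∀ x, (x, i, i) ∈ B) :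
    Nat.card (Block2 B n) ≤ Nat.card (BlockD B i (n + 1)) := by
  simp only [Nat.card_coe_set_eq]
  exact Set.ncard_le_ncard_of_injOn (padConst i) (fun u hu => padConst_mem_blockD hi hu)
    (padConst_injective i).injOn (Set.toFinite _)

theorem card_blockN_le_card_block2 (n : ℕ) : Nat.card (BlockN B n) ≤ Nat.card (Block2 B n) :=
  Nat.card_mono (Set.toFinite _) fun _ hu => hu.1

end Blocks

section Rigidity

variable {B : Finset (Fin 2 × Fin 2 × Fin 2)}

theorem eq_of_diag_mem (hdiag : ¬ (((0 : Fin 2), (0 : Fin 2), (0 : Fin 2)) ∈ B ∧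
      ((1 : Fin 2), (1 : Fin 2), (1 : Fin 2)) ∈ B))
    {a b : Fin 2} (ha : (a, a, a) ∈ B) (hb : (b, b, b) ∈ B) : a = b := by
  fin_cases a <;> fin_cases b <;> simp_all

theorem eq_of_mem_of_diag_mem
    (hpar : ¬ ∃ i : Fin 2, ((0 : Fin 2), i, i) ∈ B ∧ ((1 : Fin 2), i, i) ∈ B)
    {x a : Fin 2} (ha : (a, a, a) ∈ B) (hx : (x, a, a) ∈ B) : x = a := by
  fin_cases a <;> fin_cases x <;> simp_all

variable {m : ℕ} {u : Node (m + 2) → Fin 2}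

theorem diag_mem_of_mem_blockN (hu : u ∈ BlockN B (m + 2))
    (huniq : ∀ {a b}, (a, a, a) ∈ B → (b, b, b) ∈ B → a = b)
    (hparent : ∀ {x a}, (a, a, a) ∈ B → (x, a, a) ∈ B → x = a)
    (w : Node (m + 2)) (hw : w.1.length ≤ m) : (u w, u w, u w) ∈ B := by
  suffices key : ∀ d (v : List (Fin 2)) (hv : v.length + d = m),
      (u ⟨v, by omega⟩, u ⟨v, by omega⟩, u ⟨v, by omega⟩) ∈ B from
    key (m - w.1.length) w.1 (by omega)
  intro d
  induction d with
  | zero =>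
    intro v hv
    have hpat := hu.1 v (by omega)
    rwa [hu.2 v 0 (by omega), hu.2 v 1 (by omega)] at hpat
  | succ d ih =>
    intro v hv
    have h0 := ih (v ++ [0]) (by simp; omega)
    have h1 := ih (v ++ [1]) (by simp; omega)
    have hpat := hu.1 v (by omega)
    rw [huniq h1 h0] at hpat
    rwa [hparent h0 hpat]

theorem eq_root_of_mem_blockN (hu : u ∈ BlockN B (m + 2))
    (huniq : ∀ {a b}, (a, a, a) ∈ B → (b, b, b) ∈ B → a = b)
    (hparent : ∀ {x a}, (a, a, a) ∈ B → (x, a, a) ∈ B → x = a)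
    (w : Node (m + 2)) : u w = u ⟨[], by simp⟩ := by
  have hroot := diag_mem_of_mem_blockN hu huniq hparent ⟨[], by simp⟩ (by simp)
  obtain ⟨w, hw⟩ := w
  by_cases hint : w.length ≤ m
  · exact huniq (diag_mem_of_mem_blockN hu huniq hparent _ hint) hroot
  · obtain ⟨v, j, rfl⟩ := (List.eq_nil_or_concat' w).resolve_left (by rintro rfl; simp at hint)
    simp only [List.length_append, List.length_singleton] at hw hint
    rw [hu.2 v j (by omega)]
    exact huniq (diag_mem_of_mem_blockN hu huniq hparent ⟨v, by omega⟩ (by simp only; omega))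
      hroot

theorem card_blockN_le_one
    (hdiag : ¬ (((0 : Fin 2), (0 : Fin 2), (0 : Fin 2)) ∈ B ∧
      ((1 : Fin 2), (1 : Fin 2), (1 : Fin 2)) ∈ B))
    (hpar : ¬ ∃ i : Fin 2, ((0 : Fin 2), i, i) ∈ B ∧ ((1 : Fin 2), i, i) ∈ B) (m : ℕ) :
    Nat.card (BlockN B (m + 2)) ≤ 1 := by
  have huniq {a b : Fin 2} := eq_of_diag_mem (a := a) (b := b) hdiag
  have hparent {x a : Fin 2} := eq_of_mem_of_diag_mem (x := x) (a := a) hpar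
  have hroot {u} (hu : u ∈ BlockN B (m + 2)) :=
    diag_mem_of_mem_blockN hu huniq hparent ⟨[], by simp⟩ (by simp)
  refine Finite.card_le_one_iff_subsingleton.mpr ⟨fun u v => Subtype.ext (funext fun w => ?_)⟩
  rw [eq_root_of_mem_blockN u.2 huniq hparent w, eq_root_of_mem_blockN v.2 huniq hparent w]
  exact huniq (hroot u.2) (hroot v.2)

end Rigidity

section Growth

theorem log_log_natCast_nonpos {m : ℕ} (hm : m ≤ 2) : log (log m) ≤ 0 := by
  interval_cases m
  · simp
  · simp
  · exact log_nonpos (log_nonneg (by norm_num)) (by push_cast; linarith [log_two_lt_d9])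

-- `log (log 2) < 0 = log (log 1)`, so monotonicity needs `b` past `exp 1`.
theorem log_log_natCast_le {a b : ℕ} (hab : a ≤ b) (hb : 3 ≤ b) :
    log (log a) ≤ log (log b) := by
  have hlogb : 1 ≤ log b := by
    rw [le_log_iff_exp_le (by positivity)]
    calc exp 1 ≤ 3 := (exp_one_lt_d9.trans (by norm_num)).le
      _ ≤ b := by exact_mod_cast hb
  rcases Nat.lt_or_ge a 2 with ha | ha
  · interval_cases a <;> simpa using log_nonneg hlogb
  · have hloga : 0 < log a := log_pos (by exact_mod_cast ha)
    exact log_le_log hloga (log_le_log (by positivity) (by exact_mod_cast hab))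

variable {c d : ℕ → ℕ} {h : ℝ}

theorem eventually_three_le_of_tendsto_log_log_div (hpos : 0 < h)
    (hc : Tendsto (fun n : ℕ => log (log (c n)) / n) atTop (𝓝 h)) :
    ∀ᶠ n in atTop, 3 ≤ c n := by
  filter_upwards [hc.eventually (lt_mem_nhds hpos), eventually_gt_atTop 0] with n hn hn0
  by_contra! hlt
  have := (div_pos_iff_of_pos_right (by exact_mod_cast hn0)).mp hn
  linarith [log_log_natCast_nonpos (Nat.le_of_lt_succ hlt)]

theorem tendsto_log_log_div_of_eventually_le_one (hd : ∀ᶠ n in atTop, d n ≤ 1) :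
    Tendsto (fun n : ℕ => log (log (d n)) / n) atTop (𝓝 0) := by
  refine tendsto_const_nhds.congr' (hd.mono fun n hn => ?_)
  rcases Nat.le_one_iff_eq_zero_or_eq_one.mp hn with h0 | h1 <;> simp [*]

theorem tendsto_log_log_div_of_le_of_le_add {k : ℕ} (hpos : 0 < h)
    (hc : Tendsto (fun n : ℕ => log (log (c n)) / n) atTop (𝓝 h))
    (hdc : ∀ n, d n ≤ c n) (hcd : ∀ᶠ n in atTop, c n ≤ d (n + k)) :
    Tendsto (fun n : ℕ => log (log (d n)) / n) atTop (𝓝 h) := by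
  have hc3 := eventually_three_le_of_tendsto_log_log_div hpos hc
  rw [← tendsto_add_atTop_iff_nat k]
  have hupper := (tendsto_add_atTop_iff_nat k).mpr hc
  have hlower := hc.mul (tendsto_natCast_div_add_atTop (k : ℝ))
  rw [mul_one] at hlower
  refine tendsto_of_tendsto_of_tendsto_of_le_of_le' hlower hupper ?_ ?_
  · filter_upwards [hcd, hc3, eventually_gt_atTop 0] with n hcdn hc3n hn
    rw [div_mul_div_cancel₀ (by positivity), Nat.cast_add]
    exact div_le_div_of_nonneg_right (log_log_natCast_le hcdn (hc3n.trans hcdn)) (by positivity)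
  · filter_upwards [(tendsto_add_atTop_nat k).eventually hc3] with n hc3n
    exact div_le_div_of_nonneg_right (log_log_natCast_le (hdc _) hc3n) (by positivity)

end Growth

/-- Suppose the entropy limit of the binary Markov tree-shift `X^B` exists and is
positive. Then the Neumann boundary entropy coincides with it iff either
`(1,1,1), (2,2,2) ∈ B`, or `(1,i,i), (2,i,i) ∈ B` for some symbol `i`.
(Symbols `1,2` are `0,1 : Fin 2`.) -/
theorem neumann_entropy_eq_iff (B : Finset (Fin 2 × Fin 2 × Fin 2)) (h : ℝ) (hpos : 0 < h)
    (hent : Tendsto (fun n : ℕ => Real.log (Real.log (Nat.card (Block2 B n))) / n)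
      atTop (nhds h)) :
    Tendsto (fun n : ℕ => Real.log (Real.log (Nat.card (BlockN B n))) / n)
        atTop (nhds h) ↔
      (((0 : Fin 2), (0 : Fin 2), (0 : Fin 2)) ∈ B ∧
        ((1 : Fin 2), (1 : Fin 2), (1 : Fin 2)) ∈ B) ∨
      ∃ i : Fin 2, ((0 : Fin 2), i, i) ∈ B ∧ ((1 : Fin 2), i, i) ∈ B := by
  constructor
  · intro hN
    by_contra hcond
    obtain ⟨hdiag, hpar⟩ := not_or.mp hcond
    have hle : ∀ᶠ n in atTop, Nat.card (BlockN B n) ≤ 1 :=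
      (eventually_ge_atTop 2).mono fun n hn => by
        obtain ⟨m, rfl⟩ := Nat.exists_eq_add_of_le' hn
        exact card_blockN_le_one hdiag hpar m
    exact hpos.ne' (tendsto_nhds_unique hN (tendsto_log_log_div_of_eventually_le_one hle))
  · intro hcond
    obtain ⟨k, hk⟩ : ∃ k, ∀ᶠ n in atTop,
        Nat.card (Block2 B n) ≤ Nat.card (BlockN B (n + k)) := by
      rcases hcond with ⟨h0, h1⟩ | ⟨i, h0, h1⟩
      · have hdiag (a : Fin 2) : (a, a, a) ∈ B := by fin_cases a <;> assumption
        refine ⟨1, (eventually_ge_atTop 1).mono fun n hn => ?_⟩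
        obtain ⟨m, rfl⟩ := Nat.exists_eq_add_of_le' hn
        exact card_le_card_blockN fun u hu => ⟨hu, fun w _ => hdiag (u w)⟩
      · have hi (x : Fin 2) : (x, i, i) ∈ B := by fin_cases x <;> assumption
        refine ⟨2, Eventually.of_forall fun n => (card_block2_le_card_blockD hi).trans ?_⟩
        exact card_le_card_blockN fun u hu => ⟨hu.1, fun w hw => by
          rw [hu.2 w.1 (by omega)]; exact hi i⟩
    exact tendsto_log_log_div_of_le_of_le_add hpos hent card_blockN_le_card_block2 hk
end

section
/- Let B ⊆ A × A × A be a basic set whose entropy limit exists and is positive, say ln(ln c_n)/n → h with h > 0, and let i ∈ {1,2} with ī = 3 − i. Then the Dirichlet boundary entropy with boundary value i coincides with h, i.e., ln(ln |B_n^{D_i}|)/n → h as n → ∞, if and only if either (1) both (1,i,i) ∈ B and (2,i,i) ∈ B, or (2) all three of (ī,i,i), (1,ī,ī), (2,ī,ī) belong to B. -/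
open Filter Real

/-!
If `(a,i,i) ∈ B` for every `a`, or `(ī,i,i) ∈ B` and `(a,ī,ī) ∈ B` for every `a`, then every
`m`-block extends, by one level of `i`'s or by a level of `ī`'s followed by a level of `i`'s, to a
Dirichlet block of height `m + 1` or `m + 2`. So `|B_n^{D_i}|` lies between `c_{n-2}` and `c_n`,
which have the same double-exponential growth rate.

Otherwise, read a Dirichlet block upwards from its boundary: once a level is constant, say `b`,
the triples `(·,b,b) ∈ B` leave a single choice for the level above, and the failure of both
conditions makes this so along the whole chain of forced labels starting at `i`. Hence there is
at most one Dirichlet block, and the Dirichlet entropy is `0`, not `h`.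
-/

instance inst_s16 (n : ℕ) : Finite {w : List (Fin 2) // w.length < n} :=
  List.finite_length_lt (Fin 2) n

def ForcesParent (B : Finset (Fin 2 × Fin 2 × Fin 2)) (b a : Fin 2) : Prop :=
  ∀ c, (c, b, b) ∈ B → c = a

section Blocks

variable {B : Finset (Fin 2 × Fin 2 × Fin 2)} {i : Fin 2}

theorem card_blockD_le_card_block2 (n : ℕ) : Nat.card (BlockD B i n) ≤ Nat.card (Block2 B n) :=
  Nat.card_le_card_of_injective (Set.inclusion fun _ hu => hu.1) (Set.inclusion_injective _)

/-- Pads an `m`-block with `k + 1` constant levels labeled `g 0, …, g k`. -/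
theorem card_block2_le_card_blockD_add (g : ℕ → Fin 2) (k : ℕ) (hgk : g k = i)
    (hg0 : ∀ a, (a, g 0, g 0) ∈ B) (hg : ∀ t < k, (g t, g (t + 1), g (t + 1)) ∈ B) (m : ℕ) :
    Nat.card (Block2 B m) ≤ Nat.card (BlockD B i (m + k + 1)) := by
  let pad (u : {w : List (Fin 2) // w.length < m} → Fin 2)
      (w : {w : List (Fin 2) // w.length < m + k + 1}) : Fin 2 :=
    if h : w.1.length < m then u ⟨w.1, h⟩ else g (w.1.length - m)
  have pad_mem : ∀ u ∈ Block2 B m, pad u ∈ BlockD B i (m + k + 1) := by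
    intro u hu
    refine ⟨fun v hv => ?_, fun w hw => ?_⟩
    · simp only [pad, List.length_append, List.length_cons, List.length_nil]
      split_ifs with h₁ h₂ h₂
      · exact hu v (by omega)
      · rw [show v.length + (0 + 1) - m = 0 by omega]
        exact hg0 _
      · exact absurd h₂ (by omega)
      · rw [show v.length + (0 + 1) - m = v.length - m + 1 by omega]
        exact hg _ (by omega)
    · simp only [pad, dif_neg (show ¬w.length < m by omega),
        show w.length - m = k by omega, hgk]
  refine Nat.card_le_card_of_injective (fun u => ⟨pad u.1, pad_mem u.1 u.2⟩) ?_
  intro u u' he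
  refine Subtype.ext (funext fun ⟨w, hw⟩ => ?_)
  simpa [pad, hw] using congrFun (congrArg Subtype.val he) ⟨w, by omega⟩

theorem forcesParent_one_sub_of_not_mem {b c : Fin 2} (h : (c, b, b) ∉ B) :
    ForcesParent B b (1 - c) := by
  intro c' hc'
  have : c' ≠ c := by rintro rfl; exact h hc'
  omega

theorem exists_forcesParent_of_not_forall {b : Fin 2} (h : ¬∀ c, (c, b, b) ∈ B) :
    ∃ a, ForcesParent B b a := by
  obtain ⟨c, hc⟩ := not_forall.1 h
  exact ⟨1 - c, forcesParent_one_sub_of_not_mem hc⟩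

theorem exists_forcesParent_seq_of_cycle {a b : Fin 2} (ha : ForcesParent B i a)
    (hab : ForcesParent B a b) (hba : ForcesParent B b a) :
    ∃ f : ℕ → Fin 2, f 0 = i ∧ ∀ k, ForcesParent B (f k) (f (k + 1)) := by
  refine ⟨fun k => if k = 0 then i else if Even k then b else a, rfl, fun k => ?_⟩
  rcases Nat.even_or_odd k with hk | hk
  · by_cases hk0 : k = 0
    · simpa [hk0] using ha
    · simpa [hk0, hk, Nat.even_add_one] using hba
  · simpa [hk.pos.ne', Nat.even_add_one, Nat.not_even_iff_odd.2 hk] using hab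

theorem BlockD.apply_eq_of_forcesParent {f : ℕ → Fin 2} (hf0 : f 0 = i)
    (hf : ∀ k, ForcesParent B (f k) (f (k + 1))) {n : ℕ}
    {u : {w : List (Fin 2) // w.length < n} → Fin 2} (hu : u ∈ BlockD B i n) (k : ℕ)
    (w : List (Fin 2)) (hw : w.length + k + 1 = n) : u ⟨w, by omega⟩ = f k := by
  induction k generalizing w with
  | zero => rw [hf0]; exact hu.2 w (by omega)
  | succ k ih =>
    have hB := hu.1 w (by omega)
    rw [ih (w ++ [0]) (by simp; omega), ih (w ++ [1]) (by simp; omega)] at hB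
    exact hf k _ hB

theorem card_blockD_le_one_of_forcesParent {f : ℕ → Fin 2} (hf0 : f 0 = i)
    (hf : ∀ k, ForcesParent B (f k) (f (k + 1))) (n : ℕ) : Nat.card (BlockD B i n) ≤ 1 := by
  rw [Finite.card_le_one_iff_subsingleton, Set.subsingleton_coe]
  intro u hu u' hu'
  ext ⟨w, hw⟩
  rw [BlockD.apply_eq_of_forcesParent hf0 hf hu (n - 1 - w.length) w (by omega),
    BlockD.apply_eq_of_forcesParent hf0 hf hu' (n - 1 - w.length) w (by omega)]

theorem card_blockD_le_one (h₁ : ¬∀ a, (a, i, i) ∈ B)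
    (h₂ : (1 - i, i, i) ∈ B → ¬∀ a, (a, 1 - i, 1 - i) ∈ B) (n : ℕ) :
    Nat.card (BlockD B i n) ≤ 1 := by
  suffices ∃ f : ℕ → Fin 2, f 0 = i ∧ ∀ k, ForcesParent B (f k) (f (k + 1)) by
    obtain ⟨f, hf0, hf⟩ := this
    exact card_blockD_le_one_of_forcesParent hf0 hf n
  by_cases hj : (1 - i, i, i) ∈ B
  · obtain ⟨a, ha⟩ := exists_forcesParent_of_not_forall h₁
    obtain rfl : 1 - i = a := ha _ hj
    obtain ⟨b, hb⟩ := exists_forcesParent_of_not_forall (h₂ hj)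
    obtain rfl | rfl : b = i ∨ b = 1 - i := by omega
    · exact exists_forcesParent_seq_of_cycle ha hb ha
    · exact exists_forcesParent_seq_of_cycle ha hb hb
  · have hi : ForcesParent B i i := by simpa using forcesParent_one_sub_of_not_mem hj
    exact exists_forcesParent_seq_of_cycle hi hi hi

end Blocks

theorem log_log_natCast_of_le_one {m : ℕ} (hm : m ≤ 1) : log (log m) = 0 := by
  interval_cases m <;> simp

theorem tendsto_comp_sub_div_atTop {a : ℕ → ℝ} {h : ℝ} (k : ℕ)
    (ha : Tendsto (fun n : ℕ => a n / n) atTop (nhds h)) :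
    Tendsto (fun n : ℕ => a (n - k) / n) atTop (nhds h) := by
  rw [← tendsto_add_atTop_iff_nat k]
  have hmul := ha.mul (tendsto_natCast_div_add_atTop (k : ℝ))
  rw [mul_one] at hmul
  refine hmul.congr' ?_
  filter_upwards [eventually_ne_atTop 0] with n hn
  have : (n : ℝ) ≠ 0 := Nat.cast_ne_zero.2 hn
  simp only [Nat.add_sub_cancel, Nat.cast_add]
  field_simp

theorem eventually_one_lt_of_tendsto_log_log_div {a : ℕ → ℕ} {h : ℝ} (hpos : 0 < h)
    (ha : Tendsto (fun n : ℕ => log (log (a n)) / n) atTop (nhds h)) :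
    ∀ᶠ n in atTop, 1 < (a n : ℝ) := by
  filter_upwards [ha.eventually (eventually_gt_nhds hpos)] with n hn
  have hloglog : 0 < log (log (a n)) := by
    by_contra! hle
    exact (div_nonpos_of_nonpos_of_nonneg hle n.cast_nonneg).not_gt hn
  have hlog : 0 < log (a n) := by
    linarith [(log_pos_iff (log_natCast_nonneg _)).1 hloglog]
  exact (log_pos_iff (Nat.cast_nonneg _)).1 hlog

theorem log_log_le_log_log {x y : ℝ} (hx : 1 < x) (hxy : x ≤ y) : log (log x) ≤ log (log y) :=
  log_le_log (log_pos hx) (log_le_log (by linarith) hxy)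

/-- Double-exponential growth rates are insensitive to a bounded shift of the index. -/
theorem tendsto_log_log_div_of_le_of_le_shift {c d : ℕ → ℕ} {h : ℝ} (k : ℕ) (hpos : 0 < h)
    (hc : Tendsto (fun n : ℕ => log (log (c n)) / n) atTop (nhds h))
    (hcd : ∀ m, c m ≤ d (m + k)) (hdc : ∀ n, d n ≤ c n) :
    Tendsto (fun n : ℕ => log (log (d n)) / n) atTop (nhds h) := by
  have hbig : ∀ᶠ n in atTop, 1 < (c (n - k) : ℝ) ∧ (c (n - k) : ℝ) ≤ d n := by
    filter_upwards [(tendsto_sub_atTop_nat k).eventually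
      (eventually_one_lt_of_tendsto_log_log_div hpos hc), eventually_ge_atTop k] with n hn hnk
    refine ⟨hn, ?_⟩
    exact_mod_cast Nat.sub_add_cancel hnk ▸ hcd (n - k)
  refine tendsto_of_tendsto_of_tendsto_of_le_of_le' (tendsto_comp_sub_div_atTop k hc) hc ?_ ?_
  all_goals
    filter_upwards [hbig] with n ⟨hgt, hle⟩
    refine div_le_div_of_nonneg_right ?_ n.cast_nonneg
  · exact log_log_le_log_log hgt hle
  · exact log_log_le_log_log (hgt.trans_le hle) (mod_cast hdc n)

/-- Suppose the entropy limit of the binary Markov tree-shift `X^B` exists and is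
positive, and let `i` be a symbol with complementary symbol `1 - i`. Then the Dirichlet
boundary entropy with value `i` coincides with it iff either `(1,i,i), (2,i,i) ∈ B`, or
`(ī,i,i), (1,ī,ī), (2,ī,ī) ∈ B`. (Symbols `1,2` are `0,1 : Fin 2`, and `ī = 1 - i`.) -/
theorem dirichlet_entropy_eq_iff (B : Finset (Fin 2 × Fin 2 × Fin 2)) (h : ℝ)
    (hpos : 0 < h)
    (hent : Tendsto (fun n : ℕ => Real.log (Real.log (Nat.card (Block2 B n))) / n)
      atTop (nhds h)) (i : Fin 2) :
    Tendsto (fun n : ℕ => Real.log (Real.log (Nat.card (BlockD B i n))) / n)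
        atTop (nhds h) ↔
      (((0 : Fin 2), i, i) ∈ B ∧ ((1 : Fin 2), i, i) ∈ B) ∨
      ((1 - i, i, i) ∈ B ∧ ((0 : Fin 2), 1 - i, 1 - i) ∈ B ∧
        ((1 : Fin 2), 1 - i, 1 - i) ∈ B) := by
  constructor
  · intro hD
    by_contra hne
    have hle := card_blockD_le_one (B := B) (i := i)
      (fun h₁ => hne (.inl (Fin.forall_fin_two.1 h₁)))
      (fun h₀ h₁ => hne (.inr ⟨h₀, Fin.forall_fin_two.1 h₁⟩))
    have hzero : Tendsto (fun n : ℕ => log (log (Nat.card (BlockD B i n))) / n)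
        atTop (nhds 0) := by
      simpa only [log_log_natCast_of_le_one (hle _), zero_div] using tendsto_const_nhds
    exact hpos.ne' (tendsto_nhds_unique hD hzero)
  · rintro (⟨h₀, h₁⟩ | ⟨hj, h₀, h₁⟩)
    · refine tendsto_log_log_div_of_le_of_le_shift 1 hpos hent (fun m => ?_)
        card_blockD_le_card_block2
      exact card_block2_le_card_blockD_add (fun _ => i) 0 rfl
        (Fin.forall_fin_two.2 ⟨h₀, h₁⟩) (by simp) m
    · refine tendsto_log_log_div_of_le_of_le_shift 2 hpos hent (fun m => ?_)
        card_blockD_le_card_block2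
      exact card_block2_le_card_blockD_add (fun t => if t = 0 then 1 - i else i) 1 rfl
        (Fin.forall_fin_two.2 ⟨h₀, h₁⟩) (by simpa using hj) m
end

section
/- Let (a_n)_{n≥2} and (b_n)_{n≥2} be sequences of natural numbers satisfying a_2 = 2, b_2 = 1, and for all n ≥ 3, a_n = 2·a_{n−1}·b_{n−1} and b_n = a_{n−1}². Then the sequence ln(ln a_n)/n converges to ln 2 as n → ∞, and consequently ln(ln (a_n + b_n))/n also converges to ln 2. -/
/-!
Along the recurrence the invariant `b n ≤ a n ≤ 2 b n` persists, so `a (n + 1) = 2 a n b n`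
lies between `a n ^ 2` and `2 a n ^ 2`. Hence `log a (n + 1) ≥ 2 log a n` and
`log (2 a (n + 1)) ≤ 2 log (2 a n)`, which pins `log a n` between two constant multiples of `2 ^ n`;
`a n + b n` lies between `a n` and `2 a n`, so the same bounds hold for `log (a n + b n)`.
-/

open Filter Real Topology

theorem pow_mul_le_pow_mul_of_mul_le_succ {α : Type*} [CommRing α] [PartialOrder α]
    [IsOrderedRing α] {r : α} (hr : 0 ≤ r) {v : ℕ → α} {m : ℕ}
    (h : ∀ k ≥ m, r * v k ≤ v (k + 1)) : ∀ n ≥ m, r ^ n * v m ≤ r ^ m * v n := by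
  refine Nat.le_induction (by rw [mul_comm]) fun n hmn ih => ?_
  calc r ^ (n + 1) * v m = r * (r ^ n * v m) := by ring
    _ ≤ r * (r ^ m * v n) := mul_le_mul_of_nonneg_left ih hr
    _ = r ^ m * (r * v n) := by ring
    _ ≤ r ^ m * v (n + 1) := mul_le_mul_of_nonneg_left (h n hmn) (pow_nonneg hr m)

theorem pow_mul_le_pow_mul_of_succ_le_mul {α : Type*} [CommRing α] [PartialOrder α]
    [IsOrderedRing α] {r : α} (hr : 0 ≤ r) {v : ℕ → α} {m : ℕ}
    (h : ∀ k ≥ m, v (k + 1) ≤ r * v k) : ∀ n ≥ m, r ^ m * v n ≤ r ^ n * v m := by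
  intro n hn
  have := pow_mul_le_pow_mul_of_mul_le_succ hr (v := fun k => -v k)
    (fun k hk => by simpa using h k hk) n hn
  simpa using this

theorem tendsto_log_div_natCast_of_le_of_le {u : ℕ → ℝ} {c C r : ℝ} (hc : 0 < c) (hr : 0 < r)
    (hlow : ∀ᶠ n in atTop, c * r ^ n ≤ u n) (hup : ∀ᶠ n in atTop, u n ≤ C * r ^ n) :
    Tendsto (fun n : ℕ => log (u n) / n) atTop (𝓝 (log r)) := by
  have log_div (d : ℝ) (hd : 0 < d) (n : ℕ) (hn : n ≠ 0) :
      log (d * r ^ n) / n = log d / n + log r := by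
    rw [log_mul hd.ne' (pow_pos hr n).ne', log_pow]
    field_simp
  have limit (d : ℝ) : Tendsto (fun n : ℕ => log d / n + log r) atTop (𝓝 (log r)) := by
    simpa using (tendsto_const_div_atTop_nhds_zero_nat (log d)).add_const (log r)
  refine tendsto_of_tendsto_of_tendsto_of_le_of_le' (limit c) (limit C) ?_ ?_
  · filter_upwards [hlow, eventually_ne_atTop 0] with n hn hn0
    rw [← log_div c hc n hn0]
    gcongr
  · filter_upwards [hlow, hup, eventually_ne_atTop 0] with n hlown hn hn0
    have hu : 0 < u n := (mul_pos hc (pow_pos hr n)).trans_le hlown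
    have hC : 0 < C := pos_of_mul_pos_left (hu.trans_le hn) (pow_nonneg hr.le n)
    rw [← log_div C hC n hn0]
    gcongr

theorem case_four_invariant {a b : ℕ → ℕ} (ha2 : a 2 = 2) (hb2 : b 2 = 1)
    (ha : ∀ n : ℕ, 3 ≤ n → a n = 2 * a (n - 1) * b (n - 1))
    (hb : ∀ n : ℕ, 3 ≤ n → b n = (a (n - 1)) ^ 2) :
    ∀ n ≥ 2, 0 < b n ∧ b n ≤ a n ∧ a n ≤ 2 * b n := by
  refine Nat.le_induction (by simp [ha2, hb2]) fun n hn ⟨hb0, hba, hab⟩ => ?_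
  rw [ha (n + 1) (by omega), hb (n + 1) (by omega), Nat.add_sub_cancel]
  exact ⟨pow_pos (hb0.trans_le hba) 2, by nlinarith, by nlinarith⟩

theorem case_four_sq_le_succ {a b : ℕ → ℕ} (ha2 : a 2 = 2) (hb2 : b 2 = 1)
    (ha : ∀ n : ℕ, 3 ≤ n → a n = 2 * a (n - 1) * b (n - 1))
    (hb : ∀ n : ℕ, 3 ≤ n → b n = (a (n - 1)) ^ 2) :
    ∀ n ≥ 2, a n ^ 2 ≤ a (n + 1) ∧ 2 * a (n + 1) ≤ (2 * a n) ^ 2 := by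
  intro n hn
  obtain ⟨-, hba, hab⟩ := case_four_invariant ha2 hb2 ha hb n hn
  rw [ha (n + 1) (by omega), Nat.add_sub_cancel]
  constructor <;> nlinarith

theorem case_four_log_bounds {a b : ℕ → ℕ} (ha2 : a 2 = 2) (hb2 : b 2 = 1)
    (ha : ∀ n : ℕ, 3 ≤ n → a n = 2 * a (n - 1) * b (n - 1))
    (hb : ∀ n : ℕ, 3 ≤ n → b n = (a (n - 1)) ^ 2) :
    ∀ n ≥ 2, log 2 / 4 * 2 ^ n ≤ log (a n) ∧ log (a n) ≤ log (a n + b n) ∧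
      log (a n + b n) ≤ log 2 / 2 * 2 ^ n := by
  have inv := case_four_invariant ha2 hb2 ha hb
  have pos (n : ℕ) (hn : 2 ≤ n) : (0 : ℝ) < a n := by
    have := inv n hn
    exact_mod_cast this.1.trans_le this.2.1
  have step (n : ℕ) (hn : 2 ≤ n) :
      (a n : ℝ) ^ 2 ≤ a (n + 1) ∧ 2 * (a (n + 1) : ℝ) ≤ (2 * a n) ^ 2 := by
    exact_mod_cast case_four_sq_le_succ ha2 hb2 ha hb n hn
  have hlow := pow_mul_le_pow_mul_of_mul_le_succ (m := 2) (v := fun n => log (a n))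
    zero_le_two fun n hn => calc
      2 * log (a n) = log ((a n : ℝ) ^ 2) := by rw [log_pow]; norm_num
      _ ≤ log (a (n + 1)) := log_le_log (pow_pos (pos n hn) 2) (step n hn).1
  have hup := pow_mul_le_pow_mul_of_succ_le_mul (m := 2) (v := fun n => log (2 * a n))
    zero_le_two fun n hn => calc
      log (2 * a (n + 1)) ≤ log ((2 * a n : ℝ) ^ 2) := by
        have := pos (n + 1) (by omega)
        exact log_le_log (by positivity) (step n hn).2
      _ = 2 * log (2 * a n) := by rw [log_pow]; norm_num
  intro n hn
  have hlog4 : log (2 * 2 : ℝ) = 2 * log 2 := by rw [log_mul two_ne_zero two_ne_zero]; ring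
  have hlown := hlow n hn
  have hupn := hup n hn
  simp only [ha2, Nat.cast_ofNat, hlog4] at hlown hupn
  have han := pos n hn
  have hba : (b n : ℝ) ≤ a n := by exact_mod_cast (inv n hn).2.1
  refine ⟨by linarith, log_le_log han (by linarith [(b n).cast_nonneg (α := ℝ)]), ?_⟩
  calc log (a n + b n) ≤ log (2 * a n) := log_le_log (by positivity) (by linarith)
    _ ≤ log 2 / 2 * 2 ^ n := by linarith

/-- If sequences of natural numbers satisfy `a 2 = 2`, `b 2 = 1`, and for `n ≥ 3`
`a n = 2 * a (n-1) * b (n-1)` and `b n = (a (n-1))^2`, then `ln(ln a_n)/n → ln 2`,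
and consequently `ln(ln (a_n + b_n))/n → ln 2` as well. -/
theorem case_four_recurrence_entropy (a b : ℕ → ℕ)
    (ha2 : a 2 = 2) (hb2 : b 2 = 1)
    (ha : ∀ n : ℕ, 3 ≤ n → a n = 2 * a (n - 1) * b (n - 1))
    (hb : ∀ n : ℕ, 3 ≤ n → b n = (a (n - 1)) ^ 2) :
    Tendsto (fun n : ℕ => Real.log (Real.log (a n)) / n) atTop (nhds (Real.log 2)) ∧
    Tendsto (fun n : ℕ => Real.log (Real.log ((a n : ℝ) + (b n : ℝ))) / n)
      atTop (nhds (Real.log 2)) := by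
  have bounds := case_four_log_bounds ha2 hb2 ha hb
  have hc : (0 : ℝ) < log 2 / 4 := by positivity
  refine ⟨tendsto_log_div_natCast_of_le_of_le hc two_pos (C := log 2 / 2) ?_ ?_,
    tendsto_log_div_natCast_of_le_of_le hc two_pos (C := log 2 / 2) ?_ ?_⟩ <;>
    filter_upwards [eventually_ge_atTop 2] with n hn <;>
    obtain ⟨hlow, hmono, hup⟩ := bounds n hn
  · exact hlow
  · exact hmono.trans hup
  · exact hlow.trans hmono
  · exact hup
end
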